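/- arXiv:1503.03855 — 6 statements merged into one kernel-verified Lean document; each statement's English description precedes it below -/
import Mathlib

section
/- Let G be any graph on vertex set [n], and define a 3-uniform hypergraph H on [n] by: for i < j < k, the triple {i,j,k} is an edge of H if and only if ij ∈ G, ik ∈ G, and jk ∉ G. If H contains a tight cycle C_s^3 (the 3-graph on Z_s with edges {i, i+1, i+2} for all i ∈ Z_s) as a subhypergraph, then s is divisible by 3. -/
/-!
In an edge of `H` the two pairs through the minimum are edges of `G` and the remaining pair is
not. Consecutive edges `{φ i, φ (i+1), φ (i+2)}` and `{φ (i+1), φ (i+2), φ (i+3)}` of a tight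
cycle share the pair `{φ (i+1), φ (i+2)}`, so `φ i` is the minimum of the first exactly when
`φ (i+3)` is the minimum of the second. Hence the position of the minimum inside the window
`i, i+1, i+2` drops by one mod 3 at every step, and going once around the cycle forces `3 ∣ s`.
-/

theorem dvd_of_forall_add_one {s m : ℕ} (f : ZMod s → ZMod m) (hf : ∀ i, f (i + 1) = f i + 1) :
    m ∣ s := by
  have hcast : ∀ k : ℕ, f k = f 0 + k := by
    intro k
    induction k with
    | zero => simp
    | succ k ih => rw [Nat.cast_succ, hf, ih, Nat.cast_succ, add_assoc]
  have := hcast s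
  rwa [ZMod.natCast_self, left_eq_add, ZMod.natCast_eq_zero_iff] at this

section
variable {α : Type*} [LinearOrder α]

def IsCherryAtMin (G : SimpleGraph α) (e : Finset α) : Prop :=
  ∃ x y z, x < y ∧ y < z ∧ e = {x, y, z} ∧ G.Adj x y ∧ G.Adj x z ∧ ¬G.Adj y z

def minIndex (a b c : α) : ZMod 3 :=
  if a < b ∧ a < c then 0 else if b < c then 1 else 2

theorem minIndex_eq_sub_one_of_iff {a b c d : α} (hbc : b ≠ c) (hbd : b ≠ d) (hcd : c ≠ d)
    (h : a < b ∧ a < c ↔ d < b ∧ d < c) :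
    minIndex b c d = minIndex a b c - 1 := by
  rcases hbc.lt_or_gt with hbc | hbc <;> rcases hbd.lt_or_gt with hbd | hbd <;>
    rcases hcd.lt_or_gt with hcd | hcd <;> unfold minIndex <;> split_ifs <;>
    first | decide | grind

namespace IsCherryAtMin
variable {G : SimpleGraph α} {a b c d : α}

theorem ne_and_adj_iff (h : IsCherryAtMin G {a, b, c}) :
    a ≠ b ∧ a ≠ c ∧ b ≠ c ∧ (G.Adj b c ↔ ¬(a < b ∧ a < c)) := by
  obtain ⟨x, y, z, hxy, hyz, he, hGxy, hGxz, hGyz⟩ := h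
  have hmem : ∀ t, t ∈ ({a, b, c} : Finset α) ↔ t ∈ ({x, y, z} : Finset α) := by simp [he]
  simp only [Finset.mem_insert, Finset.mem_singleton] at hmem
  have ha := (hmem a).1 (by simp)
  have hb := (hmem b).1 (by simp)
  have hc := (hmem c).1 (by simp)
  have hx := (hmem x).2 (by simp)
  have hy := (hmem y).2 (by simp)
  have hz := (hmem z).2 (by simp)
  have hxz := hxy.trans hyz
  rcases ha with rfl | rfl | rfl <;> rcases hb with rfl | rfl | rfl <;>
    rcases hc with rfl | rfl | rfl <;> grind [SimpleGraph.adj_comm]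

theorem minIndex_eq_sub_one (h₁ : IsCherryAtMin G {a, b, c}) (h₂ : IsCherryAtMin G {b, c, d}) :
    minIndex b c d = minIndex a b c - 1 := by
  obtain ⟨-, -, -, hadj₁⟩ := h₁.ne_and_adj_iff
  obtain ⟨hbc, hbd, hcd, -⟩ := h₂.ne_and_adj_iff
  rw [Finset.pair_comm, Finset.insert_comm] at h₂
  obtain ⟨-, -, -, hadj₂⟩ := h₂.ne_and_adj_iff
  exact minIndex_eq_sub_one_of_iff hbc hbd hcd (not_iff_not.1 (hadj₁.symm.trans hadj₂))

end IsCherryAtMin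
end

theorem stmt0_general (n s : ℕ) (G : SimpleGraph (Fin n))
    (H : Finset (Fin n) → Prop)
    (hH : ∀ e, H e ↔ ∃ i j k : Fin n, i < j ∧ j < k ∧ e = {i, j, k} ∧
      G.Adj i j ∧ G.Adj i k ∧ ¬ G.Adj j k)
    (φ : ZMod s → Fin n)
    (hcyc : ∀ i : ZMod s, H {φ i, φ (i + 1), φ (i + 2)}) :
    3 ∣ s := by
  have hcherry : ∀ i, IsCherryAtMin G {φ i, φ (i + 1), φ (i + 2)} := fun i => (hH _).1 (hcyc i)
  refine dvd_of_forall_add_one (fun i => -minIndex (φ i) (φ (i + 1)) (φ (i + 2))) fun i => ?_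
  have hnext := hcherry (i + 1)
  rw [add_assoc, add_assoc, one_add_one_eq_two, show (1 + 2 : ZMod s) = 3 by norm_num] at hnext ⊢
  rw [(hcherry i).minIndex_eq_sub_one hnext, neg_sub, sub_eq_neg_add]

/-- If `G` is a graph on `[n]` and `H` is the 3-graph where, for `i < j < k`,
`{i,j,k} ∈ H` iff `ij ∈ G`, `ik ∈ G` and `jk ∉ G`, then any tight cycle `C_s^3`
contained in `H` has length divisible by 3. -/
theorem stmt0 (n s : ℕ) (hs : 4 ≤ s) (G : SimpleGraph (Fin n))
    (H : Finset (Fin n) → Prop)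
    (hH : ∀ e, H e ↔ ∃ i j k : Fin n, i < j ∧ j < k ∧ e = {i, j, k} ∧
      G.Adj i j ∧ G.Adj i k ∧ ¬ G.Adj j k)
    (φ : ZMod s → Fin n) (hinj : Function.Injective φ)
    (hcyc : ∀ i : ZMod s, H {φ i, φ (i + 1), φ (i + 2)}) :
    3 ∣ s :=
  stmt0_general n s G H hH φ hcyc
end

section
/- Fix s ≥ 5 with s not divisible by 3. There is a constant c > 0 such that for all sufficiently large t, r(C_s^3, K_t^3) > 2^{c t}. Equivalently, for all sufficiently large n there exists a 3-graph H on n vertices containing no copy of C_s^3 and having independence number at most c' log n. -/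
/-- The 3-uniform Ramsey number `r(F, K_t^3)`. -/
noncomputable def ramsey3 {α : Type} (E : Set (Finset α)) (t : ℕ) : ℕ :=
  sInf {n : ℕ | ∀ red : Finset (Fin n) → Prop,
    (∃ φ : α → Fin n, Function.Injective φ ∧ ∀ e ∈ E, red (e.image φ)) ∨
    (∃ T : Finset (Fin n), T.card = t ∧ ∀ e ∈ T.powersetCard 3, ¬ red e)}

/-!
Give every ordered pair of vertices a weight `g (x, y) ∈ ZMod 3` and put
`γ x y = g (x, y) - g (y, x)`. The edges are the triples on which `γ` goes up by one at each step
around a cyclic order: `γ b c = γ a b + 1` and `γ c a = γ b c + 1`. Along a tight cycle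
`φ 0, φ 1, …` consecutive edges force `γ (φ i) (φ (i + 1))` to go up by one at each step, so
coming back to the start gives `3 ∣ s`.

A set of `3k` vertices contains `k²` triples `{aᵢ, bᵢ, cⱼ}` whose edge events, once the weights
on the pairs `aᵢbᵢ` are fixed, involve disjoint pairs of weights and each have probability `1/9`.
A union bound over all `3k`-sets with `k = 18 (⌊log₂ n⌋ + 1)` leaves a `g` whose 3-graph has
independence number below `3k`. Taking `n = r(C_s^3, K_t^3)` vertices gives the Ramsey bound, once
`r` is known to be finite (`sInf ∅ = 0`), which is the hypergraph Ramsey theorem.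
-/

open Finset Function Fintype

section Ramsey

theorem Finset.forall_mem_powersetCard_insert {α : Type*} [DecidableEq α] {P : Finset α → Prop}
    {v : α} {A : Finset α} (hv : v ∉ A) {k : ℕ} (hA : ∀ e ∈ A.powersetCard (k + 1), P e)
    (hinsert : ∀ e ∈ A.powersetCard k, P (insert v e)) :
    ∀ e ∈ (insert v A).powersetCard (k + 1), P e := by
  simp only [powersetCard_succ_insert hv, mem_union, mem_image]
  rintro e (he | ⟨e, he, rfl⟩)
  exacts [hA e he, hinsert e he]

def IsRamseyBound (k a b N : ℕ) : Prop :=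
  ∀ {α : Type} [DecidableEq α] (S : Finset α), N ≤ #S → ∀ red : Finset α → Prop,
    ∃ A ⊆ S, (#A = a ∧ ∀ e ∈ A.powersetCard k, red e) ∨
      (#A = b ∧ ∀ e ∈ A.powersetCard k, ¬ red e)

theorem IsRamseyBound.succ {k a b N₁ N₂ N : ℕ} (h₁ : IsRamseyBound (k + 1) a (b + 1) N₁)
    (h₂ : IsRamseyBound (k + 1) (a + 1) b N₂) (h : IsRamseyBound k N₁ N₂ N) :
    IsRamseyBound (k + 1) (a + 1) (b + 1) (N + 1) := by
  intro α _ S hS red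
  obtain ⟨v, hv⟩ : S.Nonempty := card_pos.mp (by omega)
  obtain ⟨A, hAS, hA⟩ :=
    h (S.erase v) (by rw [card_erase_of_mem hv]; omega) (fun e => red (insert v e))
  have hvA : v ∉ A := fun h => notMem_erase v S (hAS h)
  replace hAS : A ⊆ S := hAS.trans (erase_subset v S)
  obtain ⟨hA, hred⟩ | ⟨hA, hblue⟩ := hA
  · obtain ⟨B, hBA, ⟨hB, hBred⟩ | hBblue⟩ := h₁ A hA.ge red
    · have hvB : v ∉ B := fun h => hvA (hBA h)
      refine ⟨insert v B, insert_subset hv (hBA.trans hAS), .inl ⟨?_, ?_⟩⟩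
      · rw [card_insert_of_notMem hvB, hB]
      · exact forall_mem_powersetCard_insert hvB hBred
          fun e he => hred e (powersetCard_mono hBA he)
    · exact ⟨B, hBA.trans hAS, .inr hBblue⟩
  · obtain ⟨B, hBA, hBred | ⟨hB, hBblue⟩⟩ := h₂ A hA.ge red
    · exact ⟨B, hBA.trans hAS, .inl hBred⟩
    · have hvB : v ∉ B := fun h => hvA (hBA h)
      refine ⟨insert v B, insert_subset hv (hBA.trans hAS), .inr ⟨?_, ?_⟩⟩
      · rw [card_insert_of_notMem hvB, hB]
      · exact forall_mem_powersetCard_insert hvB hBblue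
          fun e he => hblue e (powersetCard_mono hBA he)

theorem exists_isRamseyBound (k a b : ℕ) : ∃ N, IsRamseyBound k a b N := by
  induction k generalizing a b with
  | zero =>
    refine ⟨a + b, fun S hS red => ?_⟩
    by_cases h : red ∅
    · obtain ⟨A, hAS, hA⟩ := exists_subset_card_eq (show a ≤ #S by omega)
      exact ⟨A, hAS, .inl ⟨hA, by simpa using h⟩⟩
    · obtain ⟨A, hAS, hA⟩ := exists_subset_card_eq (show b ≤ #S by omega)
      exact ⟨A, hAS, .inr ⟨hA, by simpa using h⟩⟩
  | succ k ihk =>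
    induction a generalizing b with
    | zero => exact ⟨0, fun S _ _ => ⟨∅, empty_subset S, .inl ⟨rfl, by simp⟩⟩⟩
    | succ a iha =>
      induction b with
      | zero => exact ⟨0, fun S _ _ => ⟨∅, empty_subset S, .inr ⟨rfl, by simp⟩⟩⟩
      | succ b ihb =>
        obtain ⟨N₁, h₁⟩ := iha (b + 1)
        obtain ⟨N₂, h₂⟩ := ihb
        obtain ⟨N, h⟩ := ihk N₁ N₂
        exact ⟨N + 1, h₁.succ h₂ h⟩

end Ramsey

section TightCycle

theorem ZMod.nsmul_eq_zero_of_map_add_one {s : ℕ} {G : Type*} [AddCommGroup G] {f : ZMod s → G}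
    {a : G} (hf : ∀ i, f (i + 1) = f i + a) : s • a = 0 := by
  have key : ∀ l : ℕ, f l = f 0 + l • a := by
    intro l
    induction l with
    | zero => simp
    | succ l ih => rw [Nat.cast_succ, hf, ih, succ_nsmul, add_assoc]
  simpa using key s

theorem Function.Injective.three_consecutive_ne {s : ℕ} (hs : 3 ≤ s) {V : Type*}
    {φ : ZMod s → V} (hφ : Injective φ) (i : ZMod s) :
    φ i ≠ φ (i + 1) ∧ φ (i + 1) ≠ φ (i + 2) ∧ φ i ≠ φ (i + 2) := by
  have h : ∀ m : ℕ, 0 < m → m < 3 → (m : ZMod s) ≠ 0 := fun m hm hm3 h =>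
    absurd (Nat.le_of_dvd hm ((ZMod.natCast_eq_zero_iff m s).mp h)) (by omega)
  refine ⟨fun he => h 1 one_pos (by norm_num) ?_, fun he => h 1 one_pos (by norm_num) ?_,
    fun he => h 2 two_pos (by norm_num) ?_⟩
  · simpa using hφ he
  · have := hφ he; push_cast; linear_combination -this
  · simpa using hφ he

variable {V : Type*}

-- Required of every ordering of `e`; for antisymmetric `γ`, one cyclic order suffices
-- (`isProgressionTriple_insert`).
def IsProgressionTriple (γ : V → V → ZMod 3) (e : Finset V) : Prop :=
  ∀ u ∈ e, ∀ v ∈ e, ∀ w ∈ e, u ≠ v → v ≠ w → u ≠ w → γ v w = γ u v + 1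

def progressionGraph (γ : V → V → ZMod 3) : Set (Finset V) :=
  {e | #e = 3 ∧ IsProgressionTriple γ e}

theorem isProgressionTriple_insert [DecidableEq V] {γ : V → V → ZMod 3}
    (hγ : ∀ x y, γ y x = -γ x y) {a b c : V}
    (hbc : γ b c = γ a b + 1) (hca : γ c a = γ b c + 1) :
    IsProgressionTriple γ {a, b, c} := by
  have := hγ a b; have := hγ b c; have := hγ c a
  simp only [IsProgressionTriple, mem_insert, mem_singleton]
  rintro u (rfl | rfl | rfl) v (rfl | rfl | rfl) w (rfl | rfl | rfl) huv hvw huw <;> grind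

theorem three_dvd_of_forall_isProgressionTriple [DecidableEq V] {γ : V → V → ZMod 3} {s : ℕ}
    (hs : 3 ≤ s) {φ : ZMod s → V} (hφ : Injective φ)
    (hcycle : ∀ i, IsProgressionTriple γ {φ i, φ (i + 1), φ (i + 2)}) : 3 ∣ s := by
  have step (i : ZMod s) : γ (φ (i + 1)) (φ (i + 1 + 1)) = γ (φ i) (φ (i + 1)) + 1 := by
    obtain ⟨h01, h12, h02⟩ := hφ.three_consecutive_ne hs i
    rw [add_assoc, one_add_one_eq_two]
    exact hcycle i _ (by simp) _ (by simp) _ (by simp) h01 h12 h02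
  have := ZMod.nsmul_eq_zero_of_map_add_one (f := fun i => γ (φ i) (φ (i + 1))) step
  rwa [nsmul_eq_mul, mul_one, ZMod.natCast_eq_zero_iff] at this

end TightCycle

section Counting

theorem card_filter_forall_ne_mul_le {ι κ β M : Type*} [Fintype ι] [DecidableEq ι] [Fintype κ]
    [Fintype β] [Fintype M] [DecidableEq M] [AddCommGroup M]
    (pos : κ × β → ι) (hpos : Injective pos) (F : κ → (ι → M) → β → M)
    (hF : ∀ j g g', (∀ q ∉ Set.range pos, g q = g' q) → F j g = F j g') :
    #{g : ι → M | ∀ j, (fun b => g (pos (j, b))) ≠ F j g} * card M ^ (card κ * card β) ≤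
      card M ^ card ι * (card M ^ card β - 1) ^ card κ := by
  classical
  -- `g` is determined by its values off `range pos` and by the (nonzero) differences from `F j g`
  let Φ : {g : ι → M // ∀ j, (fun b => g (pos (j, b))) ≠ F j g} →
      ({q // q ∉ Set.range pos} → M) × (κ → {w : β → M // w ≠ 0}) :=
    fun g => (fun q => g.1 q,
      fun j => ⟨(fun b => g.1 (pos (j, b))) - F j g.1, sub_ne_zero.mpr (g.2 j)⟩)
  have hΦ : Injective Φ := by
    rintro ⟨g, hg⟩ ⟨g', hg'⟩ h
    simp only [Φ, Prod.mk.injEq, funext_iff, Subtype.forall, Subtype.mk.injEq, Pi.sub_apply] at h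
    obtain ⟨hout, hin⟩ := h
    have hFeq : ∀ j, F j g = F j g' := fun j => hF j g g' hout
    ext q
    by_cases hq : q ∈ Set.range pos
    · obtain ⟨⟨j, b⟩, rfl⟩ := hq
      simpa [hFeq j] using hin j b
    · exact hout q hq
  have hrange : card {q // q ∉ Set.range pos} + card κ * card β = card ι := by
    rw [← card_prod, card_congr (Equiv.ofInjective pos hpos), add_comm, ← card_sum,
      card_congr (Equiv.sumCompl _)]
  calc #{g : ι → M | ∀ j, (fun b => g (pos (j, b))) ≠ F j g} * card M ^ (card κ * card β)
      ≤ card M ^ card {q // q ∉ Set.range pos} * (card M ^ card β - 1) ^ card κ *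
          card M ^ (card κ * card β) := by
        gcongr
        rw [← Fintype.card_subtype]
        refine (Fintype.card_le_of_injective Φ hΦ).trans_eq ?_
        simp [Fintype.card_subtype_compl]
    _ = card M ^ card ι * (card M ^ card β - 1) ^ card κ := by
        rw [← hrange, pow_add]; ring

theorem exists_forall_not_of_sum_card_filter_lt {Ω τ : Type*} [Fintype Ω] (S : Finset τ)
    (P : τ → Ω → Prop) [∀ T, DecidablePred (P T)]
    (h : ∑ T ∈ S, #{g | P T g} < card Ω) :
    ∃ g, ∀ T ∈ S, ¬ P T g := by
  classical
  by_contra! hP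
  refine h.not_ge ((card_le_card fun g _ => ?_).trans card_biUnion_le)
  obtain ⟨T, hT, hg⟩ := hP g
  exact mem_biUnion.mpr ⟨T, hT, mem_filter.mpr ⟨mem_univ g, hg⟩⟩

variable {V : Type*}

def skew {M : Type*} [AddCommGroup M] (g : V × V → M) (x y : V) : M := g (x, y) - g (y, x)

theorem skew_swap {M : Type*} [AddCommGroup M] (g : V × V → M) (x y : V) :
    skew g y x = -skew g x y :=
  (neg_sub _ _).symm

theorem exists_progressionPattern [DecidableEq V] {T : Finset V} {k : ℕ} (hT : #T = 3 * k) :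
    ∃ (pos : (Fin k × Fin k) × Bool → V × V)
      (F : Fin k × Fin k → (V × V → ZMod 3) → Bool → ZMod 3),
      Injective pos ∧ (∀ j g g', (∀ q ∉ Set.range pos, g q = g' q) → F j g = F j g') ∧
      ∀ g j, (fun b => g (pos (j, b))) = F j g →
        ∃ e ∈ T.powersetCard 3, e ∈ progressionGraph (skew g) := by
  obtain ⟨f, hf, hfT⟩ : ∃ f : Fin 3 × Fin k → V, Injective f ∧ ∀ p, f p ∈ T := by
    obtain ⟨f⟩ : Nonempty (Fin 3 × Fin k ≃ T) := ⟨Fintype.equivOfCardEq (by simp [hT])⟩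
    exact ⟨fun p => f p, Subtype.val_injective.comp f.injective, fun p => (f p).2⟩
  -- with `a i = f (0, i)`, `b i = f (1, i)`, `c j = f (2, j)`, the slots are `(b i, c j)` and
  -- `(c j, a i)`; `{a i, b i, c j}` is an edge once they take the values prescribed by `g` at
  -- `(a i, b i)`, `(b i, a i)`, `(c j, b i)` and `(a i, c j)`, none of which is a slot
  refine ⟨fun p => if p.2 then (f (1, p.1.1), f (2, p.1.2)) else (f (2, p.1.2), f (0, p.1.1)),
    fun j g β => if β then g (f (2, j.2), f (1, j.1)) + skew g (f (0, j.1)) (f (1, j.1)) + 1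
      else g (f (0, j.1), f (2, j.2)) + skew g (f (0, j.1)) (f (1, j.1)) + 2, ?_, ?_, ?_⟩
  · rintro ⟨⟨i, j⟩, _ | _⟩ ⟨⟨i', j'⟩, _ | _⟩ h <;> simp_all [hf.eq_iff]
  · rintro ⟨i, j⟩ g g' h
    have hout (x y : Fin 3) (p q : Fin k) (h12 : (x, y) ≠ (1, 2)) (h20 : (x, y) ≠ (2, 0)) :
        g (f (x, p), f (y, q)) = g' (f (x, p), f (y, q)) := by
      refine h _ ?_
      rintro ⟨⟨⟨i', j'⟩, β⟩, hp⟩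
      cases β <;> simp_all [hf.eq_iff]
    funext β
    simp only [skew, hout 2 1 j i (by decide) (by decide), hout 0 1 i i (by decide) (by decide),
      hout 1 0 i i (by decide) (by decide), hout 0 2 i j (by decide) (by decide)]
  · rintro g ⟨i, j⟩ h
    have hbc : skew g (f (1, i)) (f (2, j)) = skew g (f (0, i)) (f (1, i)) + 1 := by
      have := congrFun h true
      simp only [skew, ↓reduceIte] at this ⊢
      linear_combination this
    have hca : skew g (f (2, j)) (f (0, i)) = skew g (f (1, i)) (f (2, j)) + 1 := by
      have := congrFun h false
      simp only [skew, ↓reduceIte, Bool.false_eq_true] at this hbc ⊢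
      linear_combination this - hbc
    have hcard : #{f (0, i), f (1, i), f (2, j)} = 3 := by
      rw [card_eq_three]
      exact ⟨_, _, _, by simp [hf.eq_iff], by simp [hf.eq_iff], by simp [hf.eq_iff], rfl⟩
    exact ⟨_, mem_powersetCard.mpr ⟨by simp [insert_subset_iff, hfT], hcard⟩, hcard,
      isProgressionTriple_insert (skew_swap g) hbc hca⟩

theorem exists_skew_forall_exists_mem_progressionGraph [Fintype V] [DecidableEq V] {k : ℕ}
    (hk : (card V).choose (3 * k) * 8 ^ (k * k) < 9 ^ (k * k)) :
    ∃ g : V × V → ZMod 3, ∀ T : Finset V, #T = 3 * k →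
      ∃ e ∈ T.powersetCard 3, e ∈ progressionGraph (skew g) := by
  classical
  set bad : Finset V → (V × V → ZMod 3) → Prop :=
    fun T g => ¬ ∃ e ∈ T.powersetCard 3, e ∈ progressionGraph (skew g)
  have hbad (T : Finset V) (hT : #T = 3 * k) :
      #{g | bad T g} * 9 ^ (k * k) ≤ 3 ^ (card V * card V) * 8 ^ (k * k) := by
    obtain ⟨pos, F, hpos, hF, hedge⟩ := exists_progressionPattern hT
    calc #{g | bad T g} * 9 ^ (k * k)
        ≤ #{g : V × V → ZMod 3 | ∀ j, (fun b => g (pos (j, b))) ≠ F j g} *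
            card (ZMod 3) ^ (card (Fin k × Fin k) * card Bool) := by
          refine Nat.mul_le_mul (card_le_card fun g hg => ?_) (by simp [ZMod.card, pow_mul'])
          exact mem_filter.mpr ⟨mem_univ g, fun j hj => (mem_filter.mp hg).2 (hedge g j hj)⟩
      _ ≤ 3 ^ (card V * card V) * 8 ^ (k * k) := by
          refine (card_filter_forall_ne_mul_le pos hpos F hF).trans_eq ?_
          simp [ZMod.card]
  have hsum : ∑ T ∈ univ.powersetCard (3 * k), #{g | bad T g} < card (V × V → ZMod 3) := by
    rw [Fintype.card_fun, card_prod, ZMod.card]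
    refine lt_of_mul_lt_mul_right ?_ (Nat.zero_le (9 ^ (k * k)))
    calc (∑ T ∈ univ.powersetCard (3 * k), #{g | bad T g}) * 9 ^ (k * k)
        ≤ ∑ T ∈ univ.powersetCard (3 * k), 3 ^ (card V * card V) * 8 ^ (k * k) := by
          rw [sum_mul]
          exact sum_le_sum fun T hT => hbad T (mem_powersetCard.mp hT).2
      _ = 3 ^ (card V * card V) * ((card V).choose (3 * k) * 8 ^ (k * k)) := by
          rw [sum_const, card_powersetCard, card_univ, smul_eq_mul, mul_left_comm]
      _ < 3 ^ (card V * card V) * 9 ^ (k * k) := by gcongr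
  obtain ⟨g, hg⟩ := exists_forall_not_of_sum_card_filter_lt _ bad hsum
  exact ⟨g, fun T hT => not_not.mp (hg T (mem_powersetCard.mpr ⟨subset_univ T, hT⟩))⟩

end Counting

theorem choose_mul_eight_pow_lt_nine_pow {n m : ℕ} (hn : n < 2 ^ m) (hm : 0 < m) :
    n.choose (3 * (18 * m)) * 8 ^ (18 * m * (18 * m)) < 9 ^ (18 * m * (18 * m)) :=
  calc n.choose (3 * (18 * m)) * 8 ^ (18 * m * (18 * m))
      ≤ n ^ (3 * (18 * m)) * 8 ^ (18 * m * (18 * m)) := by gcongr; exact Nat.choose_le_pow _ _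
    _ < (2 ^ m) ^ (3 * (18 * m)) * 8 ^ (18 * m * (18 * m)) := by gcongr
    _ = (8 ^ 19) ^ (18 * m * m) := by
        rw [show (8 : ℕ) = 2 ^ 3 by rfl, ← pow_mul, ← pow_mul, ← pow_mul, ← pow_add,
          ← pow_mul]
        ring_nf
    _ < (9 ^ 18) ^ (18 * m * m) := by gcongr; norm_num
    _ = 9 ^ (18 * m * (18 * m)) := by rw [← pow_mul]; ring_nf

theorem two_rpow_lt_of_lt_log {n t : ℕ} (ht : 107 ≤ t) (h : t < 54 * (Nat.log 2 n + 1)) :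
    (2 : ℝ) ^ (1 / 108 * (t : ℝ)) < n := by
  have hL : t < 108 * Nat.log 2 n := by omega
  have hn : n ≠ 0 := by rintro rfl; simp at hL
  calc (2 : ℝ) ^ (1 / 108 * (t : ℝ)) < 2 ^ (Nat.log 2 n : ℝ) := by
        refine Real.rpow_lt_rpow_of_exponent_lt one_lt_two ?_
        have : (t : ℝ) < 108 * Nat.log 2 n := by exact_mod_cast hL
        linarith
    _ = ((2 ^ Nat.log 2 n : ℕ) : ℝ) := by simp
    _ ≤ n := by exact_mod_cast Nat.pow_log_le_self 2 hn

theorem mul_log_add_one_le {n : ℕ} (hn : 2 ≤ n) :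
    (54 * (Nat.log 2 n + 1) : ℝ) ≤ 108 / Real.log 2 * Real.log n := by
  have hlog2 : 0 < Real.log 2 := Real.log_pos one_lt_two
  have hL : (Nat.log 2 n : ℝ) ≤ Real.log n / Real.log 2 :=
    (Real.natLog_le_logb n 2).trans_eq (by simp [Real.logb])
  have h1 : 1 ≤ Real.log n / Real.log 2 := by
    rw [one_le_div hlog2]; exact Real.log_le_log two_pos (by exact_mod_cast hn)
  calc (54 * (Nat.log 2 n + 1) : ℝ) ≤ 54 * (2 * (Real.log n / Real.log 2)) := by linarith
    _ = 108 / Real.log 2 * Real.log n := by ring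

section TightCycleFree

variable {V : Type*} [Fintype V] [DecidableEq V]

theorem exists_tightCycleFree_indep_lt {s : ℕ} (hs : 3 ≤ s) (hs3 : ¬ 3 ∣ s) {k : ℕ}
    (hk : (card V).choose (3 * k) * 8 ^ (k * k) < 9 ^ (k * k)) :
    ∃ H : Set (Finset V), (∀ e ∈ H, #e = 3) ∧
      (¬ ∃ φ : ZMod s → V, Injective φ ∧ ∀ i, {φ i, φ (i + 1), φ (i + 2)} ∈ H) ∧
      ∀ T : Finset V, (∀ e ∈ T.powersetCard 3, e ∉ H) → #T < 3 * k := by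
  obtain ⟨g, hg⟩ := exists_skew_forall_exists_mem_progressionGraph (V := V) hk
  refine ⟨progressionGraph (skew g), fun e he => he.1, ?_, fun T hT => ?_⟩
  · rintro ⟨φ, hφ, hcycle⟩
    exact hs3 (three_dvd_of_forall_isProgressionTriple hs hφ fun i => (hcycle i).2)
  · by_contra! hTk
    obtain ⟨T', hT'T, hT'⟩ := exists_subset_card_eq hTk
    obtain ⟨e, he, heH⟩ := hg T' hT'
    exact hT e (powersetCard_mono hT'T he) heH

theorem exists_tightCycleFree_indep_lt_log (s n : ℕ) (hs : 3 ≤ s) (hs3 : ¬ 3 ∣ s) :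
    ∃ H : Set (Finset (Fin n)), (∀ e ∈ H, #e = 3) ∧
      (¬ ∃ φ : ZMod s → Fin n, Injective φ ∧ ∀ i, {φ i, φ (i + 1), φ (i + 2)} ∈ H) ∧
      ∀ T : Finset (Fin n), (∀ e ∈ T.powersetCard 3, e ∉ H) →
        #T < 54 * (Nat.log 2 n + 1) := by
  have hk := choose_mul_eight_pow_lt_nine_pow (m := Nat.log 2 n + 1)
    (Nat.lt_pow_succ_log_self one_lt_two n) (by positivity)
  obtain ⟨H, hH3, hcycle, hindep⟩ :=
    exists_tightCycleFree_indep_lt hs hs3 (by rwa [Fintype.card_fin])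
  exact ⟨H, hH3, hcycle, fun T hT => (hindep T hT).trans_eq (by ring)⟩

end TightCycleFree

theorem ramsey3_tightCycle_spec {s : ℕ} (hs : 3 ≤ s) (t : ℕ)
    (red : Finset (Fin (ramsey3 {e : Finset (ZMod s) | ∃ i : ZMod s, e = {i, i + 1, i + 2}} t)) →
      Prop) :
    (∃ φ : ZMod s → Fin _, Injective φ ∧ ∀ i, red {φ i, φ (i + 1), φ (i + 2)}) ∨
      ∃ T : Finset (Fin _), #T = t ∧ ∀ e ∈ T.powersetCard 3, ¬ red e := by
  have : NeZero s := ⟨by omega⟩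
  have hne : {n : ℕ | ∀ red : Finset (Fin n) → Prop,
      (∃ φ : ZMod s → Fin n, Injective φ ∧
        ∀ e ∈ {e : Finset (ZMod s) | ∃ i : ZMod s, e = {i, i + 1, i + 2}},
          red (e.image φ)) ∨
      ∃ T : Finset (Fin n), #T = t ∧ ∀ e ∈ T.powersetCard 3, ¬ red e}.Nonempty := by
    obtain ⟨N, hN⟩ := exists_isRamseyBound 3 s t
    refine ⟨N, fun red => ?_⟩
    obtain ⟨A, -, ⟨hA, hred⟩ | hblue⟩ := hN (univ : Finset (Fin N)) (by simp) red
    · obtain ⟨f⟩ : Nonempty (ZMod s ≃ A) :=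
        ⟨Fintype.equivOfCardEq (by simp [ZMod.card, hA])⟩
      have hf : Injective fun i => (f i : Fin N) := Subtype.val_injective.comp f.injective
      refine .inl ⟨_, hf, ?_⟩
      rintro _ ⟨i, rfl⟩
      obtain ⟨h01, h12, h02⟩ := hf.three_consecutive_ne hs i
      refine hred _ (mem_powersetCard.mpr ⟨?_, ?_⟩)
      · simp [image_insert, insert_subset_iff]
      · simpa [image_insert] using card_eq_three.mpr ⟨_, _, _, h01, h02, h12, rfl⟩
    · exact .inr ⟨A, hblue⟩
  obtain ⟨φ, hφ, hcycle⟩ | hindep := Nat.sInf_mem hne red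
  · refine .inl ⟨φ, hφ, fun i => ?_⟩
    have := hcycle _ ⟨i, rfl⟩
    rwa [image_insert, image_insert, image_singleton] at this
  · exact .inr hindep

/-- for fixed `s ≥ 5` with `3 ∤ s`, there is `c > 0` with
`r(C_s^3, K_t^3) > 2^{c t}` for large `t`; equivalently, for all large `n` there is a
3-graph `H` on `n` vertices with no copy of `C_s^3` and independence number at most
`c' log n`. -/
theorem stmt8 (s : ℕ) (hs : 5 ≤ s) (hs3 : ¬ (3 ∣ s)) :
    (∃ c : ℝ, 0 < c ∧ ∀ᶠ t : ℕ in Filter.atTop,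
      (2 : ℝ) ^ (c * t) < (ramsey3 {e : Finset (ZMod s) | ∃ i : ZMod s, e = {i, i + 1, i + 2}} t : ℝ)) ∧
    (∃ c' : ℝ, 0 < c' ∧ ∀ᶠ n : ℕ in Filter.atTop,
      ∃ H : Set (Finset (Fin n)),
        (∀ e ∈ H, e.card = 3) ∧
        (¬ ∃ φ : ZMod s → Fin n, Function.Injective φ ∧
          ∀ i : ZMod s, ({φ i, φ (i + 1), φ (i + 2)} : Finset (Fin n)) ∈ H) ∧
        (∀ T : Finset (Fin n), (∀ e ∈ T.powersetCard 3, e ∉ H) →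
          (T.card : ℝ) ≤ c' * Real.log n)) := by
  have hs' : 3 ≤ s := by omega
  refine ⟨⟨1 / 108, by norm_num, Filter.eventually_atTop.mpr ⟨107, fun t ht => ?_⟩⟩,
    ⟨108 / Real.log 2, by positivity, Filter.eventually_atTop.mpr ⟨2, fun n hn => ?_⟩⟩⟩
  · obtain ⟨H, -, hcycle, hindep⟩ := exists_tightCycleFree_indep_lt_log s (ramsey3 _ t) hs' hs3
    obtain hcopy | ⟨T, hT, hTindep⟩ := ramsey3_tightCycle_spec hs' t (· ∈ H)
    · exact absurd hcopy hcycle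
    · exact two_rpow_lt_of_lt_log ht (hT.symm.trans_lt (hindep T hTindep))
  · obtain ⟨H, hH3, hcycle, hindep⟩ := exists_tightCycleFree_indep_lt_log s n hs' hs3
    refine ⟨H, hH3, hcycle, fun T hT => ?_⟩
    calc (#T : ℝ) ≤ 54 * (Nat.log 2 n + 1) := by exact_mod_cast (hindep T hT).le
      _ ≤ 108 / Real.log 2 * Real.log n := mul_log_add_one_le hn
end

section
/- Let G^{k-1} be any (k-1)-uniform hypergraph on vertex set [n], and define a k-graph H on [n] by: for i_1 < i_2 < ... < i_k, the set e = {i_1,...,i_k} is an edge of H iff {i_2,...,i_k} ∉ G^{k-1} and every other (k-1)-subset of e is in G^{k-1}. If H contains the tight cycle C_s^k as a subhypergraph, then s is divisible by k. -/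
/-!
Write the `i`-th edge of the cycle as the window `φ i, …, φ (i + k - 1)` and let `m i < k` be the
position of its minimum in that window. Consecutive edges share the `(k-1)`-set
`S = {φ (i + 1), …, φ (i + k - 1)}`, obtained from the first by deleting its first vertex and
from the second by deleting its last one. So `S ∉ G` says both `m i = 0` and `m (i + 1) = k - 1`;
if instead `S ∈ G`, both minima lie in `S` and coincide, so `m (i + 1) = m i - 1`. Either way
`m (i + 1) ≡ m i - 1 (mod k)`, and going once round the cycle gives `s ≡ 0 (mod k)`.
-/

open Finset Function

theorem dvd_of_forall_add_one_eq_sub_one {s k : ℕ} (g : ZMod s → ZMod k)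
    (hg : ∀ i, g (i + 1) = g i - 1) : k ∣ s := by
  have hiter : ∀ j : ℕ, g j = g 0 - j := by
    intro j
    induction j with
    | zero => simp
    | succ j ih => rw [Nat.cast_succ, hg, ih, Nat.cast_succ, sub_add_eq_sub_sub]
  have hs := hiter s
  rwa [ZMod.natCast_self, eq_comm, sub_eq_self, ZMod.natCast_eq_zero_iff] at hs

namespace ZMod

variable {α : Type*} {s : ℕ}

theorem apply_add_natCast_inj {φ : ZMod s → α} (hφ : Injective φ) (i : ZMod s) {a b : ℕ}
    (ha : a < s) (hb : b < s) : φ (i + a) = φ (i + b) ↔ a = b := by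
  refine ⟨fun h => ?_, fun h => h ▸ rfl⟩
  have hab := (ZMod.natCast_eq_natCast_iff' a b s).1 (add_left_cancel (hφ h))
  rwa [Nat.mod_eq_of_lt ha, Nat.mod_eq_of_lt hb] at hab

end ZMod

section Window

variable {α : Type*} [DecidableEq α] {s : ℕ}

def window (φ : ZMod s → α) (k : ℕ) (i : ZMod s) : Finset α :=
  (range k).image fun j : ℕ => φ (i + j)

theorem mem_window {φ : ZMod s → α} {k : ℕ} {i : ZMod s} {x : α} :
    x ∈ window φ k i ↔ ∃ j < k, φ (i + j) = x := by
  simp [window]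

variable {φ : ZMod s → α} {K : ℕ}

theorem apply_add_mem_window {k j : ℕ} (hj : j < k) (i : ZMod s) : φ (i + j) ∈ window φ k i :=
  mem_window.2 ⟨j, hj, rfl⟩

theorem apply_mem_window_succ (i : ZMod s) : φ i ∈ window φ (K + 1) i := by
  simpa using apply_add_mem_window (φ := φ) K.succ_pos i

theorem window_succ_eq_insert_left (i : ZMod s) :
    window φ (K + 1) i = insert (φ i) (window φ K (i + 1)) := by
  ext x
  simp only [mem_insert, mem_window, Nat.exists_lt_succ_left]
  push_cast
  simp only [add_zero, eq_comm, add_assoc, add_comm (1 : ZMod s)]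

theorem window_succ_eq_insert_right (i : ZMod s) :
    window φ (K + 1) i = insert (φ (i + K)) (window φ K i) := by
  ext x
  simp only [mem_insert, mem_window, Nat.exists_lt_succ_right, eq_comm, or_comm]

theorem window_succ_erase_left (hφ : Injective φ) (hK : K < s) (i : ZMod s) :
    (window φ (K + 1) i).erase (φ i) = window φ K (i + 1) := by
  rw [window_succ_eq_insert_left, erase_insert fun h => ?_]
  obtain ⟨j, hj, hφj⟩ := mem_window.1 h
  have := (ZMod.apply_add_natCast_inj hφ i (a := j + 1) (b := 0) (by omega) (by omega)).1
    (by simpa [add_assoc, add_comm (1 : ZMod s)] using hφj)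
  omega

theorem window_succ_erase_right (hφ : Injective φ) (hK : K < s) (i : ZMod s) :
    (window φ (K + 1) i).erase (φ (i + K)) = window φ K i := by
  rw [window_succ_eq_insert_right, erase_insert fun h => ?_]
  obtain ⟨j, hj, hφj⟩ := mem_window.1 h
  have := (ZMod.apply_add_natCast_inj hφ i (hj.trans hK) hK).1 hφj
  omega

end Window

section MinOffset

variable {α : Type*} [DecidableEq α] [LinearOrder α] {s K : ℕ} {φ : ZMod s → α}

def IsMinDefect (G : Set (Finset α)) (e : Finset α) (x : α) : Prop :=
  IsLeast (e : Set α) x ∧ ∀ z ∈ e, (e.erase z ∈ G ↔ z ≠ x)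

theorem isMinDefect_iff {G : Set (Finset α)} {e : Finset α} {x : α} :
    IsMinDefect G e x ↔
      x ∈ e ∧ (∀ y ∈ e, x ≤ y) ∧ e.erase x ∉ G ∧ ∀ z ∈ e, z ≠ x → e.erase z ∈ G := by
  constructor
  · rintro ⟨⟨hx, hmin⟩, herase⟩
    exact ⟨hx, hmin, fun hxG => (herase x hx).1 hxG rfl, fun z hz => (herase z hz).2⟩
  · rintro ⟨hx, hmin, hxG, hzG⟩
    exact ⟨⟨hx, hmin⟩, fun z hz => ⟨fun h hzx => hxG (hzx ▸ h), hzG z hz⟩⟩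

variable {G : Set (Finset α)} {m : ZMod s → ℕ} (hφ : Injective φ) (hK : K < s)
  (hm : ∀ i, m i ≤ K) (hdef : ∀ i, IsMinDefect G (window φ (K + 1) i) (φ (i + m i)))
include hφ hK hm hdef

theorem offset_eq_zero_iff (i : ZMod s) : m i = 0 ↔ m (i + 1) = K := by
  have hleft := (hdef i).2 _ (apply_mem_window_succ i)
  have hright := (hdef (i + 1)).2 _ (apply_add_mem_window K.lt_succ_self (i + 1))
  rw [window_succ_erase_left hφ hK] at hleft
  rw [window_succ_erase_right hφ hK] at hright
  have h0 := ZMod.apply_add_natCast_inj hφ i (a := 0) (by omega) ((hm i).trans_lt hK)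
  have h1 := ZMod.apply_add_natCast_inj hφ (i + 1) hK ((hm (i + 1)).trans_lt hK)
  rw [Nat.cast_zero, add_zero] at h0
  grind

theorem offset_succ_add_one (i : ZMod s) (h0 : m i ≠ 0) : m (i + 1) + 1 = m i := by
  have hK' : m (i + 1) ≠ K := mt (offset_eq_zero_iff hφ hK hm hdef i).2 h0
  have hx : φ (i + m i) ∈ window φ K (i + 1) := by
    refine (window_succ_erase_left hφ hK i) ▸ mem_erase.2 ⟨fun h => h0 ?_, (hdef i).1.1⟩
    exact (ZMod.apply_add_natCast_inj hφ i (b := 0) ((hm i).trans_lt hK) (by omega)).1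
      (by rwa [Nat.cast_zero, add_zero])
  have hx' : φ (i + 1 + m (i + 1)) ∈ window φ K (i + 1) := by
    refine (window_succ_erase_right hφ hK (i + 1)) ▸
      mem_erase.2 ⟨fun h => hK' ?_, (hdef (i + 1)).1.1⟩
    exact (ZMod.apply_add_natCast_inj hφ (i + 1) ((hm (i + 1)).trans_lt hK) hK).1 h
  have heq : φ (i + m i) = φ (i + 1 + m (i + 1)) :=
    le_antisymm ((hdef i).1.2 (erase_subset _ _ (window_succ_erase_left hφ hK i ▸ hx')))
      ((hdef (i + 1)).1.2 (erase_subset _ _ (window_succ_erase_right hφ hK (i + 1) ▸ hx)))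
  have hsucc : m (i + 1) + 1 < s := by have := hm (i + 1); omega
  refine (ZMod.apply_add_natCast_inj hφ i hsucc ((hm i).trans_lt hK)).1 ?_
  rw [heq, Nat.cast_succ, add_comm _ (1 : ZMod s), add_assoc]

theorem offset_succ_eq_sub_one (i : ZMod s) : (m (i + 1) : ZMod (K + 1)) = m i - 1 := by
  by_cases h0 : m i = 0
  · rw [(offset_eq_zero_iff hφ hK hm hdef i).1 h0, h0, Nat.cast_zero, zero_sub,
      eq_neg_iff_add_eq_zero]
    exact_mod_cast ZMod.natCast_self (K + 1)
  · rw [← offset_succ_add_one hφ hK hm hdef i h0, Nat.cast_succ, add_sub_cancel_right]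

theorem dvd_of_isMinDefect_window : K + 1 ∣ s :=
  dvd_of_forall_add_one_eq_sub_one (fun i => (m i : ZMod (K + 1)))
    (offset_succ_eq_sub_one hφ hK hm hdef)

end MinOffset

theorem stmt10_general (n k s : ℕ) (hks : k ≤ s)
    (G : Set (Finset (Fin n)))
    (H : Finset (Fin n) → Prop)
    (hH : ∀ e : Finset (Fin n), H e ↔ (e.card = k ∧ ∃ x ∈ e, (∀ y ∈ e, x ≤ y) ∧
      e.erase x ∉ G ∧ ∀ z ∈ e, z ≠ x → e.erase z ∈ G))
    (φ : ZMod s → Fin n) (hinj : Function.Injective φ)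
    (hcyc : ∀ i : ZMod s, H ((Finset.range k).image fun j : ℕ => φ (i + (j : ZMod s)))) :
    k ∣ s := by
  have hdef : ∀ i, ∃ j < k, IsMinDefect G (window φ k i) (φ (i + j)) := by
    intro i
    obtain ⟨-, x, hx, hmin⟩ := (hH _).1 (hcyc i)
    obtain ⟨j, hj, rfl⟩ := mem_window.1 hx
    exact ⟨j, hj, isMinDefect_iff.2 ⟨hx, hmin⟩⟩
  choose m hm hdef using hdef
  obtain ⟨K, rfl⟩ : ∃ K, k = K + 1 := ⟨k - 1, by have := hm 0; omega⟩
  exact dvd_of_isMinDefect_window hinj hks (fun i => Nat.le_of_lt_succ (hm i)) hdef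

/-- let `G` be a `(k-1)`-graph on `[n]` and let `H` be the `k`-graph where
a `k`-set `e = {i₁ < i₂ < … < i_k}` is an edge iff `{i₂, …, i_k} ∉ G` (the `(k-1)`-subset
omitting the minimum) and every other `(k-1)`-subset of `e` is in `G`.  Then any tight
cycle `C_s^k` contained in `H` has length divisible by `k`. -/
theorem stmt10 (n k s : ℕ) (hk : 3 ≤ k) (hks : k ≤ s)
    (G : Set (Finset (Fin n))) (hG : ∀ e ∈ G, e.card = k - 1)
    (H : Finset (Fin n) → Prop)
    (hH : ∀ e : Finset (Fin n), H e ↔ (e.card = k ∧ ∃ x ∈ e, (∀ y ∈ e, x ≤ y) ∧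
      e.erase x ∉ G ∧ ∀ z ∈ e, z ≠ x → e.erase z ∈ G))
    (φ : ZMod s → Fin n) (hinj : Function.Injective φ)
    (hcyc : ∀ i : ZMod s, H ((Finset.range k).image fun j : ℕ => φ (i + (j : ZMod s)))) :
    k ∣ s :=
  stmt10_general n k s hks G H hH φ hinj hcyc
end

section
/- For every t there exists a partial Steiner triple system S on a vertex set of size t (a collection of 3-element subsets in which every pair of vertices is contained in at most one triple) with |S| ≥ t^2/7, for all sufficiently large t. -/
/-!
In a finite abelian group `G`, the 3-element sets with sum zero form a partial Steiner triple
system: two distinct elements `a, b` of such a set determine its third element `-(a + b)`.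
Every ordered pair `(a, b)` for which `a`, `b`, `-(a + b)` are distinct spans one of these
triples, and each triple arises from exactly six pairs; at most `3|G|` pairs are degenerate,
so there are at least `(|G|² - 3|G|) / 6` triples. For `G = ℤ/t` and `t ≥ 21` this is `≥ t²/7`.
-/

open Finset

variable {G : Type*} [AddCommGroup G] [Fintype G] [DecidableEq G]

variable (G) in
def zeroSumTriples : Finset (Finset G) :=
  {e | #e = 3 ∧ ∑ x ∈ e, x = 0}

theorem mem_zeroSumTriples {e : Finset G} :
    e ∈ zeroSumTriples G ↔ #e = 3 ∧ ∑ x ∈ e, x = 0 := by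
  simp [zeroSumTriples]

theorem eq_triple_of_mem_zeroSumTriples {e : Finset G} (he : e ∈ zeroSumTriples G)
    {a b : G} (ha : a ∈ e) (hb : b ∈ e) (hab : a ≠ b) : e = {a, b, -(a + b)} := by
  obtain ⟨hcard, hsum⟩ := mem_zeroSumTriples.1 he
  have hsub : {a, b} ⊆ e := insert_subset ha (singleton_subset_iff.2 hb)
  obtain ⟨c, hc⟩ : ∃ c, e \ {a, b} = {c} := by
    rw [← card_eq_one, card_sdiff_of_subset hsub, hcard, card_pair hab]
  have hc_eq : c = -(a + b) := by
    have := sum_sdiff hsub (f := id)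
    simp only [hc, sum_singleton, sum_pair hab, id] at this
    rw [eq_neg_iff_add_eq_zero, ← hsum, ← this]
  rw [← union_sdiff_of_subset hsub, hc, hc_eq]
  ext x
  simp only [mem_union, mem_insert, mem_singleton, or_assoc]

theorem card_inter_le_one_of_mem_zeroSumTriples {e f : Finset G} (he : e ∈ zeroSumTriples G)
    (hf : f ∈ zeroSumTriples G) (hef : e ≠ f) : #(e ∩ f) ≤ 1 := by
  by_contra! h
  obtain ⟨a, ha, b, hb, hab⟩ := one_lt_card.1 h
  rw [mem_inter] at ha hb
  exact hef <| (eq_triple_of_mem_zeroSumTriples he ha.1 hb.1 hab).trans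
    (eq_triple_of_mem_zeroSumTriples hf ha.2 hb.2 hab).symm

variable (G) in
def nondegeneratePairs : Finset (G × G) :=
  {p | p.1 ≠ p.2 ∧ p.1 ≠ -(p.1 + p.2) ∧ p.2 ≠ -(p.1 + p.2)}

theorem card_mul_self_le_card_nondegeneratePairs_add :
    Fintype.card G * Fintype.card G ≤ #(nondegeneratePairs G) + 3 * Fintype.card G := by
  set degenerate : Finset (G × G) :=
    univ.image (fun x => (x, x)) ∪ univ.image (fun x => (x, -(x + x))) ∪
      univ.image (fun x => (-(x + x), x))
  have hdeg : #degenerate ≤ 3 * Fintype.card G :=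
    calc #degenerate
        ≤ #(univ.image fun x : G => (x, x)) + #(univ.image fun x : G => (x, -(x + x))) +
            #(univ.image fun x : G => (-(x + x), x)) :=
          (card_union_le _ _).trans (Nat.add_le_add_right (card_union_le _ _) _)
      _ ≤ #(univ : Finset G) + #(univ : Finset G) + #(univ : Finset G) := by
          gcongr <;> exact card_image_le
      _ = 3 * Fintype.card G := by rw [card_univ]; ring
  have hsub : univ \ degenerate ⊆ nondegeneratePairs G := by
    rintro ⟨a, b⟩ hp
    simp only [degenerate, mem_sdiff, mem_union, mem_image, mem_univ, true_and, Prod.mk.injEq,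
      not_or, not_exists, not_and] at hp
    simp only [nondegeneratePairs, mem_filter, mem_univ, true_and]
    refine ⟨hp.1.1 a rfl, fun h => hp.1.2 a rfl ?_, fun h => hp.2 b ?_ rfl⟩ <;>
    · rw [eq_neg_iff_add_eq_zero] at h
      rw [neg_eq_iff_add_eq_zero, ← h]
      abel
  calc Fintype.card G * Fintype.card G
      = #(univ : Finset (G × G)) := by rw [card_univ, Fintype.card_prod]
    _ ≤ #(univ \ degenerate) + #degenerate := card_le_card_sdiff_add_card
    _ ≤ #(nondegeneratePairs G) + 3 * Fintype.card G := add_le_add (card_le_card hsub) hdeg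

theorem card_nondegeneratePairs_le :
    #(nondegeneratePairs G) ≤ 6 * #(zeroSumTriples G) := by
  have hmaps : ∀ p ∈ nondegeneratePairs G, ({p.1, p.2, -(p.1 + p.2)} : Finset G) ∈
      zeroSumTriples G := by
    rintro ⟨a, b⟩ hp
    obtain ⟨h₁, h₂, h₃⟩ : a ≠ b ∧ a ≠ -(a + b) ∧ b ≠ -(a + b) := (mem_filter.1 hp).2
    refine mem_zeroSumTriples.2 ⟨card_eq_three.2 ⟨a, b, _, h₁, h₂, h₃, rfl⟩, ?_⟩
    rw [sum_insert (by simp only [mem_insert, mem_singleton, not_or]; exact ⟨h₁, h₂⟩),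
      sum_pair h₃]
    abel
  refine card_le_mul_card_image_of_maps_to hmaps 6 fun e he => ?_
  have hfiber : {p ∈ nondegeneratePairs G | {p.1, p.2, -(p.1 + p.2)} = e} ⊆ e.offDiag := by
    rintro ⟨a, b⟩ hp
    obtain ⟨hnondeg, rfl⟩ := mem_filter.1 hp
    exact mem_offDiag.2 ⟨by simp, by simp, (mem_filter.1 hnondeg).2.1⟩
  calc _ ≤ #e.offDiag := card_le_card hfiber
    _ = 6 := by rw [offDiag_card, (mem_zeroSumTriples.1 he).1]

theorem card_mul_self_le_six_mul_card_zeroSumTriples_add :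
    Fintype.card G * Fintype.card G ≤ 6 * #(zeroSumTriples G) + 3 * Fintype.card G :=
  card_mul_self_le_card_nondegeneratePairs_add.trans
    (Nat.add_le_add_right card_nondegeneratePairs_le _)

/-- for all sufficiently large `t` there is a partial Steiner triple system
`S` on a `t`-element vertex set (a family of 3-element sets, any two of which meet in at
most one vertex) with `|S| ≥ t²/7`. -/
theorem stmt14 : ∀ᶠ t : ℕ in Filter.atTop,
    ∃ S : Finset (Finset (Fin t)),
      (∀ e ∈ S, e.card = 3) ∧
      (∀ e ∈ S, ∀ f ∈ S, e ≠ f → (e ∩ f).card ≤ 1) ∧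
      (t : ℝ) ^ 2 / 7 ≤ (S.card : ℝ) := by
  filter_upwards [Filter.eventually_ge_atTop 21] with t ht
  have : NeZero t := ⟨by omega⟩
  refine ⟨zeroSumTriples (Fin t), fun e he => (mem_zeroSumTriples.1 he).1,
    fun e he f hf => card_inter_le_one_of_mem_zeroSumTriples he hf, ?_⟩
  have hcount : (t : ℝ) * t ≤ 6 * #(zeroSumTriples (Fin t)) + 3 * t := by
    exact_mod_cast Fintype.card_fin t ▸ card_mul_self_le_six_mul_card_zeroSumTriples_add
  have ht' : (21 : ℝ) ≤ t := by exact_mod_cast ht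
  rw [div_le_iff₀ (by norm_num)]
  nlinarith
end

section
/- There is a constant c > 0 such that for all sufficiently large n there exists a 3-graph H on n vertices with independence number α(H) < c log n such that every tight cycle C_s^3 contained in H has length s divisible by 3. -/
/-!
Colour the ordered pairs of vertices by `Φ : V × V → ZMod 3` and take as edges the triples on
which, for every ordering `(a, b, c)`, `Φ (b, c) = Φ (a, b) + 1`. Walking around a tight cycle
the colour of consecutive pairs then goes up by one at every step and is back after `s` steps,
so `3 ∣ s`.

For independence, split a `3m`-set into `a₁ … aₘ`, `b₁ … bₘ`, `c₁ … cₘ`. Once the colours of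
`(aⱼ, bⱼ)` and `(bⱼ, aⱼ)` are fixed, `{aⱼ, bⱼ, cᵢ}` is an edge iff the four pairs through `cᵢ`
take one prescribed value out of `81`; these pairs are disjoint for different `(i, j)`, so a
uniformly random `Φ` leaves the set independent with probability at most `(80/81)^(m²)`.
The union bound `C(n, 3m) (80/81)^(m²) < 1` holds for `m = 180 (⌊log₂ n⌋ + 1)`.
-/

open Finset Function Fintype

theorem card_filter_forall_block_ne_mul_le {α β ι κ : Type*} [Fintype α] [DecidableEq α]
    [Fintype β] [DecidableEq β] [Fintype ι] [Fintype κ]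
    (K : ι × κ → α) (hK : Injective K)
    (forbidden : ({a // a ∉ Set.range K} → β) → ι → κ → β) :
    #{Φ : α → β | ∀ i, (fun k => Φ (K (i, k))) ≠ forbidden (fun a => Φ a) i} *
        card β ^ (card ι * card κ) ≤
      card β ^ card α * (card β ^ card κ - 1) ^ card ι := by
  classical
  set s := ({Φ : α → β | ∀ i, (fun k => Φ (K (i, k))) ≠ forbidden (fun a => Φ a) i} : Finset _)
  have fibre (f : {a // a ∉ Set.range K} → β) :
      #{Φ ∈ s | (fun a => Φ a : {a // a ∉ Set.range K} → β) = f} ≤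
        (card β ^ card κ - 1) ^ card ι := by
    calc _ ≤ #(piFinset fun i => (univ : Finset (κ → β)).erase (forbidden f i)) := by
          refine card_le_card_of_injOn (fun Φ i k => Φ (K (i, k))) ?_ ?_
          · intro Φ hΦ
            simp only [coe_filter, s, mem_filter, mem_univ, true_and] at hΦ
            simpa [← hΦ.2] using hΦ.1
          · intro Φ hΦ Ψ hΨ h
            simp only [coe_filter, s, mem_filter, mem_univ, true_and] at hΦ hΨ
            funext a
            by_cases ha : a ∈ Set.range K
            · obtain ⟨⟨i, k⟩, rfl⟩ := ha
              exact congrFun (congrFun h i) k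
            · exact congrFun (hΦ.2.trans hΨ.2.symm) ⟨a, ha⟩
      _ = _ := by simp [card_univ]
  have hcompl : card {a // a ∉ Set.range K} + card ι * card κ = card α := by
    have := Fintype.card_le_of_injective K hK
    rw [Fintype.card_subtype_compl, Set.card_range_of_injective hK, ← card_prod]
    omega
  calc _ ≤ (card β ^ card κ - 1) ^ card ι * card β ^ card {a // a ∉ Set.range K} *
        card β ^ (card ι * card κ) := by
        gcongr
        simpa using
          card_le_mul_card_image_of_maps_to (fun Φ _ => mem_univ _) _ fun f _ => fibre f
    _ = _ := by rw [← hcompl, pow_add]; ring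

namespace TightCycle

variable {V : Type*}

def IsAscendingTriple (Φ : V × V → ZMod 3) (e : Finset V) : Prop :=
  e.card = 3 ∧ ∀ a ∈ e, ∀ b ∈ e, ∀ c ∈ e, a ≠ b → a ≠ c → b ≠ c → Φ (b, c) = Φ (a, b) + 1

instance [DecidableEq V] (Φ : V × V → ZMod 3) : DecidablePred (IsAscendingTriple Φ) :=
  fun _ => inferInstanceAs (Decidable (_ ∧ _))

section

variable [DecidableEq V] {Φ : V × V → ZMod 3}

theorem isAscendingTriple_insert_insert_singleton {u v w : V}
    (huv : u ≠ v) (huw : u ≠ w) (hvw : v ≠ w)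
    (h₁ : Φ (v, w) = Φ (u, v) + 1) (h₂ : Φ (w, u) = Φ (u, v) + 2)
    (h₃ : Φ (u, w) = Φ (v, u) + 1) (h₄ : Φ (w, v) = Φ (v, u) + 2) :
    IsAscendingTriple Φ {u, v, w} := by
  refine ⟨card_eq_three.mpr ⟨u, v, w, huv, huw, hvw, rfl⟩, ?_⟩
  simp only [mem_insert, mem_singleton]
  rintro a (rfl | rfl | rfl) b (rfl | rfl | rfl) c (rfl | rfl | rfl) hab hac hbc <;>
    first | contradiction | grind

theorem three_dvd_of_tight_cycle {s : ℕ} (hs : 3 ≤ s) (φ : ZMod s → V) (hφ : Injective φ)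
    (hcycle : ∀ i, IsAscendingTriple Φ {φ i, φ (i + 1), φ (i + 2)}) : 3 ∣ s := by
  have h₁ : (1 : ZMod s) ≠ 0 := by
    exact_mod_cast mt (ZMod.natCast_eq_zero_iff 1 s).mp
      (Nat.not_dvd_of_pos_of_lt one_pos (by omega))
  have h₂ : (2 : ZMod s) ≠ 0 := by
    exact_mod_cast mt (ZMod.natCast_eq_zero_iff 2 s).mp
      (Nat.not_dvd_of_pos_of_lt two_pos (by omega))
  have step (i : ZMod s) : Φ (φ (i + 1), φ (i + 2)) = Φ (φ i, φ (i + 1)) + 1 :=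
    (hcycle i).2 _ (by simp) _ (by simp) _ (by simp)
      (hφ.ne (by simpa using h₁)) (hφ.ne (by simpa using h₂))
      (hφ.ne fun h => h₁ (by linear_combination -h))
  have drift (k : ℕ) : Φ (φ k, φ (k + 1)) = Φ (φ 0, φ 1) + k := by
    induction k with
    | zero => simp
    | succ k ih =>
      push_cast
      rw [add_assoc, one_add_one_eq_two, step, ih]
      ring
  simpa [ZMod.natCast_eq_zero_iff] using drift s

end

section

variable {m : ℕ}

def blockPair (v : Fin 3 × Fin m → V) (x : (Fin m × Fin m) × Fin 4) : V × V :=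
  let a := v (0, x.1.2); let b := v (1, x.1.2); let c := v (2, x.1.1)
  ![(b, c), (c, a), (a, c), (c, b)] x.2

variable {v : Fin 3 × Fin m → V}

theorem blockPair_injective (hv : Injective v) : Injective (blockPair v) := by
  rintro ⟨⟨i, j⟩, d⟩ ⟨⟨i', j'⟩, d'⟩ h
  fin_cases d <;> fin_cases d' <;> simp_all [blockPair, hv.eq_iff]

theorem blockPair_ne (hv : Injective v) {p q : Fin 3} (hp : p ≠ 2) (hq : q ≠ 2) (j j' : Fin m)
    (x : (Fin m × Fin m) × Fin 4) : blockPair v x ≠ (v (p, j), v (q, j')) := by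
  obtain ⟨⟨i, j⟩, d⟩ := x
  fin_cases d <;> simp [blockPair, hv.eq_iff, hp.symm, hq.symm]

variable [Fintype V] [DecidableEq V]

theorem card_filter_forall_not_isAscendingTriple_mul_le (hv : Injective v) :
    #{Φ : V × V → ZMod 3 | ∀ i j, ¬ IsAscendingTriple Φ {v (0, j), v (1, j), v (2, i)}} *
        81 ^ (m * m) ≤ 3 ^ card (V × V) * 80 ^ (m * m) := by
  let pattern (f : {p // p ∉ Set.range (blockPair v)} → ZMod 3) (x : Fin m × Fin m) :
      Fin 4 → ZMod 3 :=
    let ab := f ⟨(v (0, x.2), v (1, x.2)), fun ⟨y, hy⟩ => blockPair_ne hv (by decide)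
      (by decide) _ _ y hy⟩
    let ba := f ⟨(v (1, x.2), v (0, x.2)), fun ⟨y, hy⟩ => blockPair_ne hv (by decide)
      (by decide) _ _ y hy⟩
    ![ab + 1, ab + 2, ba + 1, ba + 2]
  calc _ ≤ #{Φ : V × V → ZMod 3 | ∀ x, (fun d => Φ (blockPair v (x, d))) ≠
          pattern (fun p => Φ p) x} * 81 ^ (m * m) := by
        gcongr ?_ * _
        refine card_le_card (monotone_filter_right _ fun Φ _ hΦ x h => hΦ x.1 x.2 ?_)
        refine isAscendingTriple_insert_insert_singleton ?_ ?_ ?_ (congrFun h 0)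
          (congrFun h 1) (congrFun h 2) (congrFun h 3) <;> simp [hv.eq_iff]
    _ = _ * 3 ^ (card (Fin m × Fin m) * card (Fin 4)) := by
        congr 1
        rw [card_prod, Fintype.card_fin, Fintype.card_fin, pow_mul' 3 (m * m) 4]
        norm_num
    _ ≤ _ := by
      simpa using card_filter_forall_block_ne_mul_le _ (blockPair_injective hv) pattern

theorem card_filter_forall_subset_not_isAscendingTriple_mul_le {T : Finset V}
    (hT : #T = 3 * m) :
    #{Φ : V × V → ZMod 3 | ∀ e ⊆ T, ¬ IsAscendingTriple Φ e} * 81 ^ (m * m) ≤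
      3 ^ card (V × V) * 80 ^ (m * m) := by
  let e : Fin 3 × Fin m ≃ T := finProdFinEquiv.trans ((finCongr hT.symm).trans T.equivFin.symm)
  refine le_trans ?_ (card_filter_forall_not_isAscendingTriple_mul_le
    (v := Subtype.val ∘ e) (Subtype.val_injective.comp e.injective))
  gcongr ?_ * _
  refine card_le_card (monotone_filter_right _ fun Φ _ hΦ i j => hΦ _ ?_)
  simp [insert_subset_iff]

theorem exists_forall_card_lt_of_forall_subset_not_isAscendingTriple
    (hm : (card V).choose (3 * m) * 80 ^ (m * m) < 81 ^ (m * m)) :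
    ∃ Φ : V × V → ZMod 3,
      ∀ T : Finset V, (∀ e ⊆ T, ¬ IsAscendingTriple Φ e) → #T < 3 * m := by
  by_contra! h
  have hcover : (univ : Finset (V × V → ZMod 3)) ⊆ (powersetCard (3 * m) univ).biUnion
      fun T => {Φ : V × V → ZMod 3 | ∀ e ⊆ T, ¬ IsAscendingTriple Φ e} := by
    intro Φ _
    obtain ⟨T, hΦ, hT⟩ := h Φ
    obtain ⟨T', hT'T, hT'⟩ := exists_subset_card_eq hT
    simpa using ⟨T', hT', fun e he => hΦ e (he.trans hT'T)⟩
  refine lt_irrefl (3 ^ card (V × V) * 81 ^ (m * m)) ?_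
  calc 3 ^ card (V × V) * 81 ^ (m * m)
      = #(univ : Finset (V × V → ZMod 3)) * 81 ^ (m * m) := by simp
    _ ≤ ∑ T ∈ powersetCard (3 * m) univ,
          #{Φ : V × V → ZMod 3 | ∀ e ⊆ T, ¬ IsAscendingTriple Φ e} * 81 ^ (m * m) := by
        rw [← sum_mul]
        gcongr
        exact (card_le_card hcover).trans card_biUnion_le
    _ ≤ ∑ T ∈ powersetCard (3 * m) (univ : Finset V), 3 ^ card (V × V) * 80 ^ (m * m) :=
        sum_le_sum fun T hT =>
          card_filter_forall_subset_not_isAscendingTriple_mul_le (mem_powersetCard.1 hT).2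
    _ = 3 ^ card (V × V) * ((card V).choose (3 * m) * 80 ^ (m * m)) := by
        rw [sum_const, card_powersetCard, card_univ, smul_eq_mul]
        ring
    _ < 3 ^ card (V × V) * 81 ^ (m * m) := by gcongr

end

theorem choose_mul_pow_lt {n m : ℕ} (hm : 0 < m) (h : n ^ 3 * 80 ^ m < 81 ^ m) :
    n.choose (3 * m) * 80 ^ (m * m) < 81 ^ (m * m) :=
  calc n.choose (3 * m) * 80 ^ (m * m) ≤ n ^ (3 * m) * 80 ^ (m * m) := by
        gcongr
        exact Nat.choose_le_pow n _
    _ = (n ^ 3 * 80 ^ m) ^ m := by ring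
    _ < (81 ^ m) ^ m := by gcongr
    _ = 81 ^ (m * m) := by ring

theorem pow_three_mul_pow_lt (n : ℕ) :
    n ^ 3 * 80 ^ (180 * (Nat.log 2 n + 1)) < 81 ^ (180 * (Nat.log 2 n + 1)) :=
  calc n ^ 3 * 80 ^ (180 * (Nat.log 2 n + 1))
      < (2 ^ (Nat.log 2 n + 1)) ^ 3 * 80 ^ (180 * (Nat.log 2 n + 1)) := by
        gcongr
        exact Nat.lt_pow_succ_log_self one_lt_two n
    _ = (2 ^ 3 * 80 ^ 180) ^ (Nat.log 2 n + 1) := by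
        rw [mul_pow, ← pow_mul, ← pow_mul, ← pow_mul, mul_comm _ 3]
    _ ≤ (81 ^ 180) ^ (Nat.log 2 n + 1) := by gcongr; norm_num
    _ = 81 ^ (180 * (Nat.log 2 n + 1)) := (pow_mul _ _ _).symm

theorem mul_natLog_add_one_le_mul_log {n : ℕ} (hn : 2 ≤ n) :
    540 * ((Nat.log 2 n : ℝ) + 1) ≤ 1600 * Real.log n := by
  have hlog2 : 0.6931471803 < Real.log 2 := Real.log_two_gt_d9
  have hlogn : Real.log 2 ≤ Real.log n := Real.log_le_log two_pos (by exact_mod_cast hn)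
  have hL : (Nat.log 2 n : ℝ) * Real.log 2 ≤ Real.log n := by
    have := Real.natLog_le_logb n 2
    rwa [Real.logb, le_div_iff₀ (by positivity)] at this
  nlinarith

end TightCycle

/-- there is `c > 0` such that for all sufficiently large `n` there is a
3-graph `H` on `n` vertices with independence number less than `c log n` in which every
tight cycle `C_s^3` has length `s` divisible by 3. -/
theorem stmt16 : ∃ c : ℝ, 0 < c ∧ ∀ᶠ n : ℕ in Filter.atTop,
    ∃ H : Set (Finset (Fin n)),
      (∀ e ∈ H, e.card = 3) ∧
      (∀ T : Finset (Fin n), (∀ e ∈ T.powersetCard 3, e ∉ H) →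
        (T.card : ℝ) < c * Real.log n) ∧
      (∀ s : ℕ, 3 ≤ s →
        (∃ φ : ZMod s → Fin n, Function.Injective φ ∧
          ∀ i : ZMod s, ({φ i, φ (i + 1), φ (i + 2)} : Finset (Fin n)) ∈ H) →
        3 ∣ s) := by
  refine ⟨1600, by norm_num, Filter.eventually_atTop.2 ⟨2, fun n hn => ?_⟩⟩
  obtain ⟨Φ, hΦ⟩ :=
    TightCycle.exists_forall_card_lt_of_forall_subset_not_isAscendingTriple (V := Fin n) <| by
      simpa using TightCycle.choose_mul_pow_lt (by positivity) (TightCycle.pow_three_mul_pow_lt n)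
  refine ⟨{e | TightCycle.IsAscendingTriple Φ e}, fun e he => he.1, fun T hT => ?_,
    fun s hs ⟨φ, hφ, hcycle⟩ => TightCycle.three_dvd_of_tight_cycle hs φ hφ hcycle⟩
  have hTm := hΦ T fun e heT he => hT e (mem_powersetCard.2 ⟨heT, he.1⟩) he
  calc (#T : ℝ) < (3 * (180 * (Nat.log 2 n + 1)) : ℕ) := by exact_mod_cast hTm
    _ = 540 * ((Nat.log 2 n : ℝ) + 1) := by push_cast; ring
    _ ≤ 1600 * Real.log n := TightCycle.mul_natLog_add_one_le_mul_log hn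
end

section
/- Define posets J_i inductively: J_1 is the disjoint union of a chain of size 1 and a chain of size t−k (elements from different chains incomparable), and for i ≥ 1, J_{i+1} is the set of order ideals (down-sets) of J_i ordered by inclusion. Then J_3 contains an antichain of size Ω(t), hence |J_4| = 2^{Ω(t)}, and more generally |J_ℓ| = t_{ℓ−2}(Ω(t)) for all ℓ ≥ 3, where t_1(x) = x and t_{i+1}(x) = 2^{t_i(x)} is the tower function. -/
/-- Tower function: `towerFn 0 x = x` and `towerFn (i+1) x = 2 ^ towerFn i x`.
(The paper's `t_i` is `towerFn (i-1)`.) -/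
def towerFn : ℕ → ℕ → ℕ
  | 0, x => x
  | i + 1, x => 2 ^ towerFn i x

/-- The posets `J_i` (indexed from 0, so `J t k (i-1)` is the paper's `J_i`):
`J_1` is the disjoint union of a chain of size 1 and a chain of size `t - k`
(elements of different chains incomparable), and `J_{i+1}` is the poset of
order ideals (down-sets) of `J_i`, ordered by inclusion. -/
def J (t k : ℕ) : ℕ → (α : Type) × PartialOrder α
  | 0 => ⟨Fin 1 ⊕ Fin (t - k), inferInstance⟩
  | i + 1 =>
    letI := (J t k i).2
    ⟨LowerSet (J t k i).1, inferInstance⟩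

/-- The order relation of `J t k i`. -/
def Jle (t k i : ℕ) (a b : (J t k i).1) : Prop := (J t k i).2.le a b

/-!
If `p₁, q₁, …, pₙ, qₙ` form an antichain of a poset `P`, the `2ⁿ` down-sets generated by one
element of each pair `{pᵢ, qᵢ}` form an antichain of `LowerSet P`. So an antichain of size `N`
in `J_i` yields one of size `2^(N/2)` in `J_{i+1}`, and iterating turns a linear antichain of
`J_3` into a tower.

For the linear antichain, let `aⱼ ∈ J_2` be the down-set generated by the singleton chain and
the `j`-th element of the long chain, and `bⱼ` the one generated by its `(2n-1-j)`-th element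
alone. The `aⱼ` increase with `j`, the `bⱼ` decrease, and no `aᵢ` is comparable with any `bⱼ`;
hence the down-sets generated by `{aⱼ, bⱼ}`, `j < n`, form an antichain of `J_3`.
-/

open Filter

def HasAntichainOfCard (P : Type*) [LE P] (n : ℕ) : Prop :=
  ∃ f : Fin n → P, Pairwise fun i j => ¬ f i ≤ f j

instance (t k i : ℕ) : PartialOrder (J t k i).1 := (J t k i).2

instance (t k i : ℕ) : Finite (J t k i).1 := by
  induction i with
  | zero => exact inferInstanceAs (Finite (Fin 1 ⊕ Fin (t - k)))
  | succ i ih => exact inferInstanceAs (Finite (LowerSet (J t k i).1))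

theorem HasAntichainOfCard.mono {P : Type*} [LE P] {m n : ℕ} (h : HasAntichainOfCard P n)
    (hmn : m ≤ n) : HasAntichainOfCard P m :=
  let ⟨f, hf⟩ := h
  ⟨f ∘ Fin.castLE hmn, hf.comp_of_injective (Fin.castLE_injective hmn)⟩

section Preorder

variable {P : Type*} [Preorder P]

theorem injective_of_pairwise_not_le {ι : Type*} {f : ι → P}
    (hf : Pairwise fun i j => ¬ f i ≤ f j) : Function.Injective f :=
  fun _ _ hij => by_contra fun hne => hf hne hij.le

theorem HasAntichainOfCard.le_card [Finite P] {n : ℕ} (h : HasAntichainOfCard P n) :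
    n ≤ Nat.card P := by
  obtain ⟨f, hf⟩ := h
  simpa using Nat.card_le_card_of_injective f (injective_of_pairwise_not_le hf)

theorem HasAntichainOfCard.exists_isAntichain {n : ℕ} (h : HasAntichainOfCard P n) :
    ∃ A : Set P, IsAntichain (· ≤ ·) A ∧ A.ncard = n := by
  obtain ⟨f, hf⟩ := h
  have hinj := injective_of_pairwise_not_le hf
  refine ⟨Set.range f, ?_, by simp [Set.ncard_range_of_injective hinj]⟩
  rintro _ ⟨i, rfl⟩ _ ⟨j, rfl⟩ hne
  exact hf (ne_of_apply_ne f hne)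

theorem pairwise_not_le_lowerClosure_range {ι κ : Type*} {f : ι × κ → P}
    (hf : Pairwise fun p q => ¬ f p ≤ f q) :
    Pairwise fun g g' : ι → κ =>
      ¬ lowerClosure (Set.range fun i => f (i, g i)) ≤
        lowerClosure (Set.range fun i => f (i, g' i)) := by
  intro g g' hne hle
  obtain ⟨i, hi⟩ := Function.ne_iff.1 hne
  obtain ⟨_, ⟨j, rfl⟩, hij⟩ := hle (subset_lowerClosure ⟨i, rfl⟩)
  obtain ⟨rfl, hg⟩ := Prod.mk.inj (not_not.1 fun hne => hf hne hij)
  exact hi hg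

theorem HasAntichainOfCard.lowerSet {n : ℕ} (h : HasAntichainOfCard P n) :
    HasAntichainOfCard (LowerSet P) (2 ^ (n / 2)) := by
  obtain ⟨f, hf⟩ := h
  let pair : Fin (n / 2) × Fin 2 → Fin n :=
    Fin.castLE (Nat.div_mul_le_self n 2) ∘ finProdFinEquiv
  have hpair : Function.Injective pair :=
    (Fin.castLE_injective _).comp finProdFinEquiv.injective
  exact ⟨_, (pairwise_not_le_lowerClosure_range (hf.comp_of_injective hpair)).comp_of_injective
    finFunctionFinEquiv.symm.injective⟩

theorem pairwise_not_le_Iic_sup_Iic {ι : Type*} [PartialOrder ι] {a b : ι → P}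
    (ha : ∀ i j, a i ≤ a j → i ≤ j) (hb : ∀ i j, b i ≤ b j → j ≤ i)
    (hab : ∀ i j, ¬ a i ≤ b j) (hba : ∀ i j, ¬ b i ≤ a j) :
    Pairwise fun i j => ¬ LowerSet.Iic (a i) ⊔ LowerSet.Iic (b i) ≤
      LowerSet.Iic (a j) ⊔ LowerSet.Iic (b j) := by
  intro i j hne hle
  have mem_sup (x : P) (hx : x = a i ∨ x = b i) : x ≤ a j ∨ x ≤ b j := by
    simpa using hle (LowerSet.mem_sup_iff.2 (by rcases hx with rfl | rfl <;> simp))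
  have hij : i ≤ j := ((mem_sup (a i) (.inl rfl)).resolve_right (hab i j)) |> ha i j
  have hji : j ≤ i := ((mem_sup (b i) (.inr rfl)).resolve_left (hba i j)) |> hb i j
  exact hne (le_antisymm hij hji)

end Preorder

theorem hasAntichainOfCard_lowerSet_lowerSet_sum {n m : ℕ} (h : 2 * n ≤ m) :
    HasAntichainOfCard (LowerSet (LowerSet (Fin 1 ⊕ Fin m))) n := by
  let chain (i : ℕ) (hi : i < 2 * n) : Fin 1 ⊕ Fin m := .inr ⟨i, by omega⟩
  let a (j : Fin n) := LowerSet.Iic (.inl 0) ⊔ LowerSet.Iic (chain j (by omega))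
  let b (j : Fin n) := LowerSet.Iic (chain (2 * n - 1 - j) (by omega))
  refine ⟨fun j => LowerSet.Iic (a j) ⊔ LowerSet.Iic (b j),
    pairwise_not_le_Iic_sup_Iic (fun i j hij => ?_) (fun i j hij => ?_) (fun i j hij => ?_)
      (fun i j hij => ?_)⟩
  · simpa [a, chain] using hij (LowerSet.mem_sup_iff.2 (.inr (LowerSet.mem_Iic_iff.2 le_rfl)))
  · have := hij (LowerSet.mem_Iic_iff.2 le_rfl)
    simp [b, chain] at this
    omega
  · simpa [b, chain] using hij (LowerSet.mem_sup_iff.2 (.inl (LowerSet.mem_Iic_iff.2 le_rfl)))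
  · have := hij (LowerSet.mem_Iic_iff.2 le_rfl)
    simp [a, chain] at this
    omega

theorem towerFn_strictMono (n : ℕ) : StrictMono (towerFn n) := by
  induction n with
  | zero => exact strictMono_id
  | succ n ih => exact fun x y hxy => Nat.pow_lt_pow_right one_lt_two (ih hxy)

theorem two_mul_towerFn_div_two_le (n : ℕ) {x : ℕ} (hx : 0 < x) :
    2 * towerFn n (x / 2) ≤ towerFn n x := by
  cases n with
  | zero => exact Nat.mul_div_le x 2
  | succ n =>
    calc 2 * 2 ^ towerFn n (x / 2) = 2 ^ (towerFn n (x / 2) + 1) := (pow_succ' 2 _).symm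
      _ ≤ 2 ^ towerFn n x :=
        Nat.pow_le_pow_right two_pos (towerFn_strictMono n (Nat.div_lt_self hx one_lt_two))

theorem exists_eventually_hasAntichainOfCard_J (k n : ℕ) :
    ∃ c : ℕ, 0 < c ∧ ∀ᶠ t : ℕ in atTop,
      HasAntichainOfCard (J t k (n + 2)).1 (towerFn n (t / c)) := by
  induction n with
  | zero =>
    refine ⟨4, four_pos, ?_⟩
    filter_upwards [eventually_ge_atTop (2 * k)] with t ht
    exact hasAntichainOfCard_lowerSet_lowerSet_sum (n := t / 4) (by omega)
  | succ n ih =>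
    obtain ⟨c, hc, hev⟩ := ih
    refine ⟨c * 2, by positivity, ?_⟩
    filter_upwards [hev, eventually_ge_atTop c] with t ht htc
    have hdouble := two_mul_towerFn_div_two_le n (Nat.div_pos htc hc)
    rw [← Nat.div_div_eq_div_mul]
    exact ht.lowerSet.mono (Nat.pow_le_pow_right two_pos (by omega))

theorem stmt17_general (k : ℕ) :
    (∃ c : ℕ, 0 < c ∧ ∀ᶠ t : ℕ in Filter.atTop,
      ∃ A : Set (J t k 2).1, IsAntichain (Jle t k 2) A ∧ t / c ≤ A.ncard) ∧
    (∃ c : ℕ, 0 < c ∧ ∀ᶠ t : ℕ in Filter.atTop,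
      2 ^ (t / c) ≤ Nat.card (J t k 3).1) ∧
    (∀ ℓ : ℕ, 3 ≤ ℓ → ∃ c : ℕ, 0 < c ∧ ∀ᶠ t : ℕ in Filter.atTop,
      towerFn (ℓ - 3) (t / c) ≤ Nat.card (J t k (ℓ - 1)).1) := by
  have card_J (n : ℕ) : ∃ c : ℕ, 0 < c ∧ ∀ᶠ t : ℕ in atTop,
      towerFn n (t / c) ≤ Nat.card (J t k (n + 2)).1 :=
    let ⟨c, hc, hev⟩ := exists_eventually_hasAntichainOfCard_J k n
    ⟨c, hc, hev.mono fun _ h => h.le_card⟩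
  refine ⟨?_, card_J 1, fun ℓ hℓ => ?_⟩
  · obtain ⟨c, hc, hev⟩ := exists_eventually_hasAntichainOfCard_J k 0
    refine ⟨c, hc, hev.mono fun t h => ?_⟩
    obtain ⟨A, hA, hcard⟩ := h.exists_isAntichain
    exact ⟨A, hA, hcard.ge⟩
  · obtain ⟨c, hc, hev⟩ := card_J (ℓ - 3)
    rw [show ℓ - 3 + 2 = ℓ - 1 by omega] at hev
    exact ⟨c, hc, hev⟩

/-- `J_3` contains an antichain of size `Ω(t)`, hence `|J_4| = 2^{Ω(t)}`,
and in general `|J_ℓ| ≥ t_{ℓ-2}(Ω(t))` for all `ℓ ≥ 3`. -/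
theorem stmt17 (k : ℕ) (hk : 3 ≤ k) :
    (∃ c : ℕ, 0 < c ∧ ∀ᶠ t : ℕ in Filter.atTop,
      ∃ A : Set (J t k 2).1, IsAntichain (Jle t k 2) A ∧ t / c ≤ A.ncard) ∧
    (∃ c : ℕ, 0 < c ∧ ∀ᶠ t : ℕ in Filter.atTop,
      2 ^ (t / c) ≤ Nat.card (J t k 3).1) ∧
    (∀ ℓ : ℕ, 3 ≤ ℓ → ∃ c : ℕ, 0 < c ∧ ∀ᶠ t : ℕ in Filter.atTop,
      towerFn (ℓ - 3) (t / c) ≤ Nat.card (J t k (ℓ - 1)).1) :=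
  stmt17_general k
end
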